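/- Jacobi triple product specialization: For any real θ, ∏_{j=1}^∞ (1 + 2^{θ−j})(1 + 2^{1−θ−j})(1 − 2^{−j}) = ∑_{n=−∞}^∞ 2^{−n(n−1)/2}·2^{−θn}. -/

import Mathlib

/-!
With `x = 2^{-θ}` and `q = 1/2` the identity is the Jacobi triple product
`∏_{j ≥ 0} (1 + x⁻¹ q^{j+1}) (1 + x q^j) (1 - q^{j+1}) = ∑_{n ∈ ℤ} q^{n(n-1)/2} x^n`,
valid for `0 < q < 1` and `x ≠ 0`. Splitting `∏_{i < 2N} (1 + x q^{i-N})` into its two halves and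
expanding it by the q-binomial theorem gives the finite form
`∏_{j < N} (1 + x⁻¹ q^{j+1}) (1 + x q^j) = ∑_{|n| ≤ N} [2N, N+n]_q q^{n(n-1)/2} x^n`.
After multiplying by `(q; q)_N`, the coefficient of `q^{n(n-1)/2} x^n` is
`(q; q)_{2N} (q; q)_N / ((q; q)_{N+n} (q; q)_{N-n})`, which tends to `1` as `N → ∞` and is bounded
by `(q; q)_∞⁻²`, so Tannery's theorem passes to the limit.
-/

open Finset Filter Topology

section CommRing

variable {R : Type*} [CommRing R] (q : R)

/-- The q-Pochhammer symbol `(q; q)_n`. -/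
def qPochhammer (n : ℕ) : R := ∏ j ∈ range n, (1 - q ^ (j + 1))

/-- Gaussian binomial coefficients, defined by the q-Pascal rule so that no division is needed. -/
def qBinom : ℕ → ℕ → R
  | _, 0 => 1
  | 0, _ + 1 => 0
  | m + 1, k + 1 => qBinom m k + q ^ (k + 1) * qBinom m (k + 1)

@[simp] lemma qPochhammer_zero : qPochhammer q 0 = 1 := by simp [qPochhammer]

lemma qPochhammer_succ (n : ℕ) :
    qPochhammer q (n + 1) = qPochhammer q n * (1 - q ^ (n + 1)) :=
  prod_range_succ _ _

@[simp] lemma qBinom_zero_right (m : ℕ) : qBinom q m 0 = 1 := by cases m <;> rfl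

lemma qBinom_succ_succ (m k : ℕ) :
    qBinom q (m + 1) (k + 1) = qBinom q m k + q ^ (k + 1) * qBinom q m (k + 1) := rfl

lemma qBinom_eq_zero_of_lt {m k : ℕ} (h : m < k) : qBinom q m k = 0 := by
  induction m generalizing k with
  | zero => obtain ⟨k, rfl⟩ := Nat.exists_eq_add_one_of_ne_zero h.ne'; rfl
  | succ m ih =>
    obtain ⟨k, rfl⟩ := Nat.exists_eq_add_one_of_ne_zero (by omega : k ≠ 0)
    rw [qBinom_succ_succ, ih (by omega), ih (by omega), mul_zero, add_zero]

@[simp] lemma qBinom_self (m : ℕ) : qBinom q m m = 1 := by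
  induction m with
  | zero => rfl
  | succ m ih => rw [qBinom_succ_succ, ih, qBinom_eq_zero_of_lt q (Nat.lt_succ_self m), mul_zero,
      add_zero]

lemma qBinom_mul_qPochhammer_mul {m k : ℕ} (h : k ≤ m) :
    qBinom q m k * (qPochhammer q k * qPochhammer q (m - k)) = qPochhammer q m := by
  induction m generalizing k with
  | zero =>
    obtain rfl : k = 0 := by omega
    simp
  | succ m ih =>
    cases k with
    | zero => simp
    | succ k =>
      rw [qBinom_succ_succ, Nat.add_sub_add_right]
      obtain rfl | hk := eq_or_lt_of_le (Nat.le_of_succ_le_succ h)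
      · simp [qBinom_eq_zero_of_lt q (Nat.lt_succ_self k)]
      · obtain ⟨d, hd⟩ : ∃ d, m - k = d + 1 := ⟨m - (k + 1), by omega⟩
        have h₁ := ih (k := k) (by omega)
        have h₂ := ih (k := k + 1) hk
        have hpow : q ^ (k + 1) * q ^ (d + 1) = q ^ (m + 1) := by
          rw [← pow_add]; congr 1; omega
        rw [show m - (k + 1) = d by omega] at h₂
        rw [hd] at h₁ ⊢
        rw [qPochhammer_succ] at h₁ h₂
        rw [qPochhammer_succ q k, qPochhammer_succ q d, qPochhammer_succ q m]
        linear_combination (1 - q ^ (k + 1)) * h₁ + q ^ (k + 1) * (1 - q ^ (d + 1)) * h₂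
          - qPochhammer q m * hpow

lemma pow_choose_two_succ (k : ℕ) : q ^ (k + 1).choose 2 = q ^ k.choose 2 * q ^ k := by
  rw [Nat.choose_succ_succ, Nat.choose_one_right, pow_add, mul_comm]

theorem prod_one_add_mul_pow_eq_sum_qBinom (m : ℕ) (z : R) :
    ∏ i ∈ range m, (1 + z * q ^ i) =
      ∑ k ∈ range (m + 1), qBinom q m k * q ^ k.choose 2 * z ^ k := by
  induction m generalizing z with
  | zero => simp
  | succ m ih =>
    calc ∏ i ∈ range (m + 1), (1 + z * q ^ i)
        = (∏ i ∈ range m, (1 + z * q * q ^ i)) * (1 + z) := by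
          rw [prod_range_succ', pow_zero, mul_one]
          exact congrArg (· * _) (prod_congr rfl fun i _ => by ring)
      _ = ∑ k ∈ range (m + 1), qBinom q m k * q ^ (k + 1).choose 2 * z ^ k * (1 + z) := by
          rw [ih, sum_mul]
          exact sum_congr rfl fun k _ => by rw [pow_choose_two_succ]; ring
      _ = ∑ k ∈ range (m + 2), qBinom q m k * q ^ (k + 1).choose 2 * z ^ k
            + ∑ k ∈ range (m + 1), qBinom q m k * q ^ (k + 1).choose 2 * z ^ (k + 1) := by
          rw [sum_range_succ _ (m + 1), qBinom_eq_zero_of_lt q (Nat.lt_succ_self m)]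
          simp only [mul_add, mul_one, sum_add_distrib, zero_mul, add_zero, pow_succ, mul_assoc]
      _ = ∑ k ∈ range (m + 1 + 1), qBinom q (m + 1) k * q ^ k.choose 2 * z ^ k := by
          have hshift : ∀ k ∈ range (m + 1),
              qBinom q m (k + 1) * q ^ (k + 1 + 1).choose 2 * z ^ (k + 1) =
                q ^ (k + 1) * qBinom q m (k + 1) * q ^ (k + 1).choose 2 * z ^ (k + 1) :=
            fun k _ => by rw [pow_choose_two_succ q (k + 1)]; ring
          rw [sum_range_succ', sum_range_succ' _ (m + 1), sum_congr rfl hshift]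
          simp only [qBinom_succ_succ, qBinom_zero_right, add_mul, sum_add_distrib]
          simp only [zero_add, Nat.choose_succ_self, Nat.choose_zero_succ, pow_zero, mul_one]
          ring

lemma prod_range_pow_succ (N : ℕ) : ∏ i ∈ range N, q ^ (i + 1) = q ^ (N + 1).choose 2 := by
  induction N with
  | zero => simp
  | succ N ih => rw [prod_range_succ, ih, ← pow_choose_two_succ]

end CommRing

lemma two_mul_ediv_two_mul_sub_one (n : ℤ) : 2 * (n * (n - 1) / 2) = n * (n - 1) :=
  Int.mul_ediv_cancel' (Int.even_mul_pred_self n).two_dvd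

lemma two_mul_natCast_choose_two (k : ℕ) : 2 * (k.choose 2 : ℤ) = k * (k - 1) := by
  have h : ((2 * k.choose 2 : ℤ) : ℚ) = ((k * (k - 1) : ℤ) : ℚ) := by
    push_cast
    rw [Nat.cast_choose_two]
    ring
  exact_mod_cast h

section Field

variable {K : Type*} [Field K] {q x : K}

/-- `n * (n - 1)` is even, so the division in the exponent is exact. -/
def jacobiTerm (q x : K) (n : ℤ) : K := q ^ (n * (n - 1) / 2) * x ^ n

def jacobiFactor (q x : K) (j : ℕ) : K :=
  (1 + x⁻¹ * q ^ (j + 1)) * (1 + x * q ^ j) * (1 - q ^ (j + 1))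

lemma jacobiTerm_natCast (k : ℕ) : jacobiTerm q x k = q ^ k.choose 2 * x ^ k := by
  have h : (k : ℤ) * (k - 1) / 2 = k.choose 2 := by
    apply mul_left_cancel₀ (two_ne_zero (α := ℤ))
    rw [two_mul_ediv_two_mul_sub_one, two_mul_natCast_choose_two]
  rw [jacobiTerm, h, zpow_natCast, zpow_natCast]

lemma jacobiTerm_neg (hq : q ≠ 0) (n : ℤ) : jacobiTerm q x (-n) = jacobiTerm q (q / x) n := by
  have h : -n * (-n - 1) / 2 = n * (n - 1) / 2 + n := by
    apply mul_left_cancel₀ (two_ne_zero (α := ℤ))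
    rw [mul_add, two_mul_ediv_two_mul_sub_one, two_mul_ediv_two_mul_sub_one]
    ring
  rw [jacobiTerm, jacobiTerm, h, zpow_add₀ hq, div_zpow, zpow_neg]
  ring

lemma jacobiTerm_natCast_sub (hq : q ≠ 0) (hx : x ≠ 0) (k N : ℕ) :
    jacobiTerm q x (k - N) = q ^ k.choose 2 * (x / q ^ N) ^ k * (q ^ (N + 1).choose 2 / x ^ N) := by
  have h : ((k : ℤ) - N) * (k - N - 1) / 2 = (k.choose 2 + (N + 1).choose 2 : ℕ) - (N * k : ℕ) := by
    apply mul_left_cancel₀ (two_ne_zero (α := ℤ))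
    have hN := two_mul_natCast_choose_two (N + 1)
    push_cast at hN ⊢
    linear_combination
      two_mul_ediv_two_mul_sub_one ((k : ℤ) - N) - two_mul_natCast_choose_two k - hN
  rw [jacobiTerm, h, zpow_sub₀ hq, zpow_sub₀ hx]
  simp only [zpow_natCast]
  rw [pow_add, pow_mul, div_pow]
  field_simp

lemma prod_range_one_add_div_pow_mul_pow (hq : q ≠ 0) (hx : x ≠ 0) (N : ℕ) :
    ∏ i ∈ range N, (1 + x / q ^ N * q ^ i) =
      x ^ N / q ^ (N + 1).choose 2 * ∏ j ∈ range N, (1 + x⁻¹ * q ^ (j + 1)) := by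
  have hfactor : ∀ j ∈ range N,
      1 + x / q ^ N * q ^ (N - 1 - j) = x / q ^ (j + 1) * (1 + x⁻¹ * q ^ (j + 1)) := by
    intro j hj
    have hN : q ^ N = q ^ (N - 1 - j) * q ^ (j + 1) := by
      rw [← pow_add]; congr 1; have := mem_range.mp hj; omega
    rw [hN]
    field_simp
    ring
  rw [← prod_range_reflect, prod_congr rfl hfactor, prod_mul_distrib, prod_div_distrib,
    prod_const, card_range, prod_range_pow_succ]

theorem prod_range_one_add_inv_mul_pow_mul_one_add_mul_pow (hq : q ≠ 0) (hx : x ≠ 0) (N : ℕ) :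
    ∏ j ∈ range N, ((1 + x⁻¹ * q ^ (j + 1)) * (1 + x * q ^ j)) =
      ∑ k ∈ range (2 * N + 1), qBinom q (2 * N) k * jacobiTerm q x (k - N) := by
  have h := prod_one_add_mul_pow_eq_sum_qBinom q (2 * N) (x / q ^ N)
  have hsecond : ∀ i ∈ range N, 1 + x / q ^ N * q ^ (N + i) = 1 + x * q ^ i := fun i _ => by
    rw [pow_add]; field_simp
  rw [two_mul, prod_range_add, prod_congr rfl hsecond, prod_range_one_add_div_pow_mul_pow hq hx,
    ← two_mul] at h
  simp only [jacobiTerm_natCast_sub hq hx, ← mul_assoc, ← sum_mul, ← h, prod_mul_distrib]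
  field_simp

theorem prod_range_jacobiFactor (hq : q ≠ 0) (hx : x ≠ 0) (N : ℕ) :
    ∏ j ∈ range N, jacobiFactor q x j =
      ∑ n ∈ Icc (-N : ℤ) N,
        qBinom q (2 * N) (N + n).toNat * qPochhammer q N * jacobiTerm q x n := by
  unfold jacobiFactor
  rw [prod_mul_distrib, prod_range_one_add_inv_mul_pow_mul_one_add_mul_pow hq hx, sum_mul]
  refine sum_nbij' (fun k => (k : ℤ) - N) (fun n => (N + n).toNat) ?_ ?_ ?_ ?_ ?_
  · intro k hk
    simp only [mem_range, mem_Icc] at hk ⊢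
    omega
  · intro n hn
    simp only [mem_range, mem_Icc] at hn ⊢
    omega
  · intro k _
    omega
  · intro n hn
    rw [mem_Icc] at hn
    omega
  · intro k _
    rw [show ((N : ℤ) + (k - N)).toNat = k by omega, qPochhammer]
    ring

end Field

section Real

variable {q : ℝ}

lemma qPochhammer_pos (hq₀ : 0 ≤ q) (hq₁ : q < 1) (n : ℕ) : 0 < qPochhammer q n :=
  prod_pos fun j _ => sub_pos.mpr (pow_lt_one₀ hq₀ hq₁ j.succ_ne_zero)

lemma qPochhammer_antitone (hq₀ : 0 ≤ q) (hq₁ : q < 1) : Antitone (qPochhammer q) :=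
  antitone_nat_of_succ_le fun n => by
    rw [qPochhammer_succ]
    exact mul_le_of_le_one_right (qPochhammer_pos hq₀ hq₁ n).le (sub_le_self _ (by positivity))

lemma qPochhammer_le_one (hq₀ : 0 ≤ q) (hq₁ : q < 1) (n : ℕ) : qPochhammer q n ≤ 1 :=
  (qPochhammer_antitone hq₀ hq₁ n.zero_le).trans_eq (qPochhammer_zero q)

lemma qBinom_eq_div (hq₀ : 0 ≤ q) (hq₁ : q < 1) {m k : ℕ} (h : k ≤ m) :
    qBinom q m k = qPochhammer q m / (qPochhammer q k * qPochhammer q (m - k)) :=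
  eq_div_of_mul_eq (mul_pos (qPochhammer_pos hq₀ hq₁ k) (qPochhammer_pos hq₀ hq₁ _)).ne'
    (qBinom_mul_qPochhammer_mul q h)

/-- `(q; q)_∞`. -/
noncomputable def qPochhammerInf (q : ℝ) : ℝ := ∏' j : ℕ, (1 - q ^ (j + 1))

lemma multipliable_one_add_mul_pow (hq : |q| < 1) (c : ℝ) :
    Multipliable fun j : ℕ => 1 + c * q ^ j :=
  multipliable_one_add_of_summable (((summable_geometric_of_abs_lt_one hq).mul_left c).abs)

lemma tendsto_qPochhammer (hq : |q| < 1) :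
    Tendsto (qPochhammer q) atTop (𝓝 (qPochhammerInf q)) := by
  have h := (multipliable_one_add_mul_pow hq (-q)).tendsto_prod_tprod_nat
  simp only [neg_mul, ← pow_succ', ← sub_eq_add_neg] at h
  exact h

lemma qPochhammerInf_pos (hq₀ : 0 ≤ q) (hq₁ : q < 1) : 0 < qPochhammerInf q := by
  have hq : |q| < 1 := abs_lt.mpr ⟨by linarith, hq₁⟩
  refine lt_of_le_of_ne (ge_of_tendsto' (tendsto_qPochhammer hq)
    fun n => (qPochhammer_pos hq₀ hq₁ n).le) (Ne.symm ?_)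
  have hne : ∀ j : ℕ, 1 + -q ^ (j + 1) ≠ 0 := fun j => by
    rw [← sub_eq_add_neg]; exact (sub_pos.mpr (pow_lt_one₀ hq₀ hq₁ j.succ_ne_zero)).ne'
  have hsum : Summable fun j : ℕ => ‖-q ^ (j + 1)‖ := by
    simpa [pow_succ] using (summable_geometric_of_lt_one (abs_nonneg q) hq).mul_right |q|
  simpa [qPochhammerInf, ← sub_eq_add_neg] using tprod_one_add_ne_zero_of_summable hne hsum

lemma qPochhammerInf_le (hq₀ : 0 ≤ q) (hq₁ : q < 1) (n : ℕ) :
    qPochhammerInf q ≤ qPochhammer q n :=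
  (qPochhammer_antitone hq₀ hq₁).le_of_tendsto
    (tendsto_qPochhammer (abs_lt.mpr ⟨by linarith, hq₁⟩)) n

lemma qBinom_two_mul_toNat_eq_div (hq₀ : 0 ≤ q) (hq₁ : q < 1) {N : ℕ} {n : ℤ}
    (hn : n ∈ Icc (-N : ℤ) N) :
    qBinom q (2 * N) (N + n).toNat =
      qPochhammer q (2 * N) / (qPochhammer q (N + n).toNat * qPochhammer q (N - n).toNat) := by
  rw [mem_Icc] at hn
  rw [qBinom_eq_div hq₀ hq₁ (by omega), show 2 * N - (N + n).toNat = (N - n).toNat by omega]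

lemma abs_qBinom_two_mul_toNat_mul_qPochhammer_le (hq₀ : 0 ≤ q) (hq₁ : q < 1) {N : ℕ} {n : ℤ}
    (hn : n ∈ Icc (-N : ℤ) N) :
    |qBinom q (2 * N) (N + n).toNat * qPochhammer q N| ≤ (qPochhammerInf q ^ 2)⁻¹ := by
  have hP := qPochhammer_pos hq₀ hq₁
  have hinf := qPochhammerInf_le hq₀ hq₁
  rw [qBinom_two_mul_toNat_eq_div hq₀ hq₁ hn, div_mul_eq_mul_div,
    abs_of_nonneg (div_nonneg (mul_pos (hP _) (hP _)).le (mul_pos (hP _) (hP _)).le), ← one_div, sq]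
  exact div_le_div₀ zero_le_one
    (mul_le_one₀ (qPochhammer_le_one hq₀ hq₁ _) (hP N).le (qPochhammer_le_one hq₀ hq₁ _))
    (mul_pos (qPochhammerInf_pos hq₀ hq₁) (qPochhammerInf_pos hq₀ hq₁))
    (mul_le_mul (hinf _) (hinf _) (qPochhammerInf_pos hq₀ hq₁).le (hP _).le)

lemma tendsto_qBinom_two_mul_toNat_mul_qPochhammer (hq₀ : 0 ≤ q) (hq₁ : q < 1) (n : ℤ) :
    Tendsto (fun N : ℕ => qBinom q (2 * N) (N + n).toNat * qPochhammer q N) atTop (𝓝 1) := by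
  have hP : ∀ f : ℕ → ℕ, (∀ N, N ≤ f N + n.natAbs) →
      Tendsto (fun N => qPochhammer q (f N)) atTop (𝓝 (qPochhammerInf q)) := fun f hf =>
    (tendsto_qPochhammer (abs_lt.mpr ⟨by linarith, hq₁⟩)).comp
      (tendsto_atTop_atTop.mpr fun b => ⟨b + n.natAbs, fun N hN => by have := hf N; omega⟩)
  have hL : qPochhammerInf q * qPochhammerInf q ≠ 0 := by
    have := qPochhammerInf_pos hq₀ hq₁; positivity
  have hlim := ((hP (2 * ·) (by omega)).mul (hP id (by simp))).div
    ((hP (fun N => (N + n).toNat) (by omega)).mul (hP (fun N => (N - n).toNat) (by omega))) hL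
  rw [div_self hL] at hlim
  refine hlim.congr' ?_
  filter_upwards [eventually_ge_atTop n.natAbs] with N hN
  rw [qBinom_two_mul_toNat_eq_div hq₀ hq₁ (by rw [mem_Icc]; omega), div_mul_eq_mul_div]
  rfl

lemma summable_pow_choose_two_mul_pow (hq : |q| < 1) (y : ℝ) :
    Summable fun k : ℕ => q ^ k.choose 2 * y ^ k := by
  refine summable_of_ratio_norm_eventually_le (r := 1 / 2) (by norm_num) ?_
  have hsmall : ∀ᶠ k : ℕ in atTop, |q| ^ k * |y| ≤ 1 / 2 := by
    have := (tendsto_pow_atTop_nhds_zero_of_lt_one (abs_nonneg q) hq).mul_const |y|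
    rw [zero_mul] at this
    exact this.eventually_le_const (by norm_num)
  filter_upwards [hsmall] with k hk
  rw [pow_choose_two_succ, pow_succ y, Real.norm_eq_abs, Real.norm_eq_abs]
  calc |q ^ k.choose 2 * q ^ k * (y ^ k * y)|
      = |q| ^ k * |y| * |q ^ k.choose 2 * y ^ k| := by simp only [abs_mul, abs_pow]; ring
    _ ≤ 1 / 2 * |q ^ k.choose 2 * y ^ k| := by gcongr

lemma summable_jacobiTerm (hq₀ : q ≠ 0) (hq : |q| < 1) (x : ℝ) : Summable (jacobiTerm q x) := by
  refine Summable.of_nat_of_neg ?_ ?_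
  · simpa only [jacobiTerm_natCast] using summable_pow_choose_two_mul_pow hq x
  · simpa only [jacobiTerm_neg hq₀, jacobiTerm_natCast] using
      summable_pow_choose_two_mul_pow hq (q / x)

lemma multipliable_jacobiFactor (hq : |q| < 1) (x : ℝ) : Multipliable (jacobiFactor q x) := by
  have h := ((multipliable_one_add_mul_pow hq (x⁻¹ * q)).mul
    (multipliable_one_add_mul_pow hq x)).mul (multipliable_one_add_mul_pow hq (-q))
  convert h using 2 with j
  simp only [jacobiFactor, pow_succ']
  ring

theorem tprod_jacobiFactor (hq₀ : 0 < q) (hq₁ : q < 1) {x : ℝ} (hx : x ≠ 0) :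
    ∏' j, jacobiFactor q x j = ∑' n : ℤ, jacobiTerm q x n := by
  have hq : |q| < 1 := abs_lt.mpr ⟨by linarith, hq₁⟩
  let F (N : ℕ) : ℤ → ℝ := Set.indicator (Icc (-N : ℤ) N) fun n =>
    qBinom q (2 * N) (N + n).toNat * qPochhammer q N * jacobiTerm q x n
  have hpartial : ∀ N, ∏ j ∈ range N, jacobiFactor q x j = ∑' n, F N n := fun N => by
    rw [prod_range_jacobiFactor hq₀.ne' hx, sum_eq_tsum_indicator]
  have hlim : Tendsto (fun N => ∑' n, F N n) atTop (𝓝 (∑' n, jacobiTerm q x n)) := by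
    refine tendsto_tsum_of_dominated_convergence
      (((summable_jacobiTerm hq₀.ne' hq x).norm).mul_left (qPochhammerInf q ^ 2)⁻¹) (fun n => ?_)
      (Eventually.of_forall fun N n => ?_)
    · have h := (tendsto_qBinom_two_mul_toNat_mul_qPochhammer hq₀.le hq₁ n).mul_const
        (jacobiTerm q x n)
      rw [one_mul] at h
      refine h.congr' ?_
      filter_upwards [eventually_ge_atTop n.natAbs] with N hN
      simp only [F]
      rw [Set.indicator_of_mem (mem_coe.mpr (mem_Icc.mpr ⟨by omega, by omega⟩))]
    · simp only [F]
      by_cases hn : n ∈ Icc (-N : ℤ) N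
      · rw [Set.indicator_of_mem (mem_coe.mpr hn), norm_mul, Real.norm_eq_abs]
        exact mul_le_mul_of_nonneg_right
          (abs_qBinom_two_mul_toNat_mul_qPochhammer_le hq₀.le hq₁ hn) (norm_nonneg _)
      · rw [Set.indicator_of_notMem (mt mem_coe.mp hn), norm_zero]
        positivity
  exact tendsto_nhds_unique
    (multipliable_jacobiFactor hq x).tendsto_prod_tprod_nat
    (hlim.congr fun N => (hpartial N).symm)

end Real

theorem jacobi_triple_product_specialization (θ : ℝ) :
    ∏' j : ℕ, ((1 + (2 : ℝ) ^ (θ - (j + 1 : ℕ))) * (1 + (2 : ℝ) ^ (1 - θ - (j + 1 : ℕ))) *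
        (1 - (2 : ℝ) ^ (-((j : ℝ) + 1)))) =
      ∑' n : ℤ, (2 : ℝ) ^ (-((n : ℝ) * ((n : ℝ) - 1)) / 2) * (2 : ℝ) ^ (-θ * (n : ℝ)) := by
  have h2 : (0 : ℝ) < 2 := two_pos
  set x : ℝ := 2 ^ (-θ) with hx_def
  have hfactor : ∀ j : ℕ,
      (1 + (2 : ℝ) ^ (θ - (j + 1 : ℕ))) * (1 + (2 : ℝ) ^ (1 - θ - (j + 1 : ℕ))) *
        (1 - (2 : ℝ) ^ (-((j : ℝ) + 1))) = jacobiFactor 2⁻¹ x j := fun j => by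
    rw [show 1 - θ - ((j + 1 : ℕ) : ℝ) = -θ - j by push_cast; ring,
      show -((j : ℝ) + 1) = -((j + 1 : ℕ) : ℝ) by push_cast; ring,
      Real.rpow_sub h2, Real.rpow_sub h2, Real.rpow_neg h2.le, Real.rpow_neg h2.le]
    simp only [Real.rpow_natCast, jacobiFactor, hx_def, Real.rpow_neg h2.le, inv_inv, inv_pow,
      div_eq_mul_inv]
  have hterm : ∀ n : ℤ, (2 : ℝ) ^ (-((n : ℝ) * ((n : ℝ) - 1)) / 2) * (2 : ℝ) ^ (-θ * (n : ℝ)) =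
      jacobiTerm 2⁻¹ x n := fun n => by
    have hexp : -((n : ℝ) * ((n : ℝ) - 1)) / 2 = -((n * (n - 1) / 2 : ℤ) : ℝ) := by
      have := congrArg (fun m : ℤ => (m : ℝ)) (two_mul_ediv_two_mul_sub_one n)
      push_cast at this
      linarith
    rw [hexp, Real.rpow_neg h2.le, Real.rpow_intCast, Real.rpow_mul h2.le, Real.rpow_intCast,
      jacobiTerm, inv_zpow]
  rw [tprod_congr hfactor, tsum_congr hterm]
  exact tprod_jacobiFactor (by norm_num) (by norm_num) (Real.rpow_pos_of_pos h2 _).ne'
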